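/- Let H be an N×m real matrix with full row rank satisfying spark(H) = N+1, let s⋄ ∈ R^m with ‖s⋄‖₀ = r⋄, y = Hs⋄, and suppose N ≥ max{2r⋄, r⋄+3} and y ≠ 0. Define σ̂²(r) = min over r-sparse s of (y - Hs)^T(HH^T)^{-1}(y - Hs)/N. Then σ̂²(r⋄) = 0, σ̂²(r) > 0 for every r < r⋄, and the r-sparse minimizer at r = r⋄ is unique and equals s⋄. -/

import Mathlib

open Matrix Set

/-- Number of nonzero entries (ℓ₀ "norm"). -/
noncomputable def l0 {m : ℕ} (s : Fin m → ℝ) : ℕ := {j | s j ≠ 0}.ncard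

/-- The weighted squared error E(s) = (y - Hs)ᵀ (HHᵀ)⁻¹ (y - Hs). -/
noncomputable def Efun {N m : ℕ} (H : Matrix (Fin N) (Fin m) ℝ) (y : Fin N → ℝ)
    (s : Fin m → ℝ) : ℝ :=
  (y - H *ᵥ s) ⬝ᵥ ((H * Hᵀ)⁻¹ *ᵥ (y - H *ᵥ s))

/-- The concentrated (profile) ML variance estimate σ̂²(r) at sparsity level r. -/
noncomputable def sigmaML {N m : ℕ} (H : Matrix (Fin N) (Fin m) ℝ) (y : Fin N → ℝ)
    (r : ℕ) : ℝ :=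
  sInf {x | ∃ t : Fin m → ℝ, l0 t ≤ r ∧ x = Efun H y t / N}

/-! Since `H` has full row rank, `(H Hᵀ)⁻¹` is positive definite, so `Efun H y t` is a positive
definite quadratic form in the residual `y - H t`; it vanishes exactly when `H t = y`, which `s⋄`
achieves. If `H t = H s⋄` with `l0 t ≤ r⋄`, then `t - s⋄` is a kernel vector with at most
`2 r⋄ ≤ N` nonzero entries, hence zero because every `N` columns of `H` are independent. So for
`r < r⋄`, `y` avoids the image of the `r`-sparse vectors, a finite union of subspaces and hence
closed; its positive distance from `y` bounds `Efun` below uniformly. -/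

lemma l0_eq_card_filter {m : ℕ} (s : Fin m → ℝ) :
    l0 s = (Finset.univ.filter (s · ≠ 0)).card := by
  rw [l0, ← Set.ncard_coe_finset]
  simp

lemma l0_sub_le {m : ℕ} (t s : Fin m → ℝ) : l0 (t - s) ≤ l0 t + l0 s := by
  refine (Set.ncard_le_ncard (fun j hj => ?_) (Set.toFinite _)).trans (Set.ncard_union_le _ _)
  by_contra h
  simp_all

lemma eq_zero_of_mulVec_eq_zero_of_l0_le {N m : ℕ} {H : Matrix (Fin N) (Fin m) ℝ} (hNm : N ≤ m)
    (hURP : ∀ A : Finset (Fin m), A.card = N →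
      LinearIndependent ℝ (fun j : A => fun i => H i (j : Fin m)))
    {d : Fin m → ℝ} (hd : H *ᵥ d = 0) (hl0 : l0 d ≤ N) : d = 0 := by
  classical
  obtain ⟨B, hsuppB, -, hB⟩ := Finset.exists_subsuperset_card_eq
    (Finset.subset_univ (Finset.univ.filter (d · ≠ 0))) (l0_eq_card_filter d ▸ hl0)
    (by simpa using hNm)
  have hout : ∀ j ∉ B, d j = 0 := fun j hj => by
    by_contra h
    exact hj (hsuppB (by simpa using h))
  have hrel : ∑ j : B, d j • (fun i => H i j) = 0 := by
    rw [← hd]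
    ext i
    rw [Finset.sum_apply, Finset.sum_coe_sort B (fun j => (d j • fun i => H i j) i),
      Finset.sum_subset (Finset.subset_univ B) (fun j _ hj => by simp [hout j hj])]
    simp [mulVec, dotProduct, mul_comm]
  have hB0 := Fintype.linearIndependent_iff.mp (hURP B hB) _ hrel
  funext j
  by_cases hj : j ∈ B
  · exact hB0 ⟨j, hj⟩
  · exact hout j hj

lemma eq_of_mulVec_eq_of_l0_add_le {N m : ℕ} {H : Matrix (Fin N) (Fin m) ℝ} (hNm : N ≤ m)
    (hURP : ∀ A : Finset (Fin m), A.card = N →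
      LinearIndependent ℝ (fun j : A => fun i => H i (j : Fin m)))
    {t s : Fin m → ℝ} (h : H *ᵥ t = H *ᵥ s) (hl0 : l0 t + l0 s ≤ N) : t = s :=
  sub_eq_zero.mp <| eq_zero_of_mulVec_eq_zero_of_l0_le hNm hURP
    (by rw [mulVec_sub, h, sub_self]) ((l0_sub_le t s).trans hl0)

lemma posDef_mul_transpose_of_rank_eq {n ι : Type*} [Fintype n] [DecidableEq n] [Fintype ι]
    {H : Matrix n ι ℝ} (hrank : H.rank = Fintype.card n) : (H * Hᵀ).PosDef := by
  have hsurj : Function.Surjective (H * Hᵀ).mulVecLin := by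
    refine LinearMap.range_eq_top.mp (Submodule.eq_top_of_finrank_eq ?_)
    rw [← rank, rank_self_mul_transpose, hrank, Module.finrank_fintype_fun_eq_card]
  simpa using (posSemidef_self_mul_conjTranspose H).posDef_iff_isUnit.mpr
    (mulVec_surjective_iff_isUnit.mp hsurj)

lemma Matrix.PosDef.exists_pos_mul_sq_norm_le {n : Type*} [Fintype n] {M : Matrix n n ℝ}
    (hM : M.PosDef) : ∃ c > 0, ∀ x : n → ℝ, c * ‖x‖ ^ 2 ≤ x ⬝ᵥ (M *ᵥ x) := by
  have hcont : Continuous fun x : n → ℝ => x ⬝ᵥ (M *ᵥ x) := by fun_prop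
  obtain ⟨c, hc, hsphere⟩ := (isCompact_sphere (0 : n → ℝ) 1).exists_forall_le'
    hcont.continuousOn (a := 0) fun x hx => hM.dotProduct_mulVec_pos
      (ne_zero_of_mem_unit_sphere ⟨x, hx⟩)
  refine ⟨c, hc, fun x => ?_⟩
  rcases eq_or_ne x 0 with rfl | hx
  · simp
  have hxn : 0 < ‖x‖ := norm_pos_iff.mpr hx
  have hunit := hsphere (‖x‖⁻¹ • x) (by simp [norm_smul, hxn.ne'])
  rw [mulVec_smul, smul_dotProduct, dotProduct_smul, smul_smul, smul_eq_mul] at hunit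
  calc c * ‖x‖ ^ 2 ≤ ‖x‖⁻¹ * ‖x‖⁻¹ * (x ⬝ᵥ (M *ᵥ x)) * ‖x‖ ^ 2 := by gcongr
    _ = x ⬝ᵥ (M *ᵥ x) := by field_simp

lemma isClosed_mulVec_image_setOf_l0_le {N m : ℕ} (H : Matrix (Fin N) (Fin m) ℝ) (r : ℕ) :
    IsClosed (H.mulVec '' {t | l0 t ≤ r}) := by
  classical
  have hunion : {t : Fin m → ℝ | l0 t ≤ r} = ⋃ A ∈ {A : Finset (Fin m) | A.card ≤ r},
      (Submodule.pi (↑A)ᶜ fun _ => ⊥ : Submodule ℝ (Fin m → ℝ)) := by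
    ext t
    simp only [mem_ofPred_eq, mem_iUnion, SetLike.mem_coe, Submodule.mem_pi,
      Submodule.mem_bot, exists_prop, mem_compl_iff]
    constructor
    · intro ht
      exact ⟨_, l0_eq_card_filter t ▸ ht, fun j hj => by simpa using hj⟩
    · rintro ⟨A, hA, htA⟩
      refine l0_eq_card_filter t ▸ (Finset.card_le_card fun j hj => ?_).trans hA
      by_contra hjA
      simp [htA j hjA] at hj
  rw [hunion, image_iUnion₂]
  exact (toFinite _).isClosed_biUnion fun A _ =>
    Submodule.map_coe H.mulVecLin _ ▸ Submodule.closed_of_finiteDimensional _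

section ProfileVariance

variable {N m : ℕ} {H : Matrix (Fin N) (Fin m) ℝ} {y : Fin N → ℝ}

lemma Efun_nonneg (hH : (H * Hᵀ).PosDef) (t : Fin m → ℝ) : 0 ≤ Efun H y t :=
  hH.inv.posSemidef.dotProduct_mulVec_nonneg _

lemma Efun_eq_zero_iff (hH : (H * Hᵀ).PosDef) {t : Fin m → ℝ} :
    Efun H y t = 0 ↔ H *ᵥ t = y := by
  have hzero := hH.inv.posSemidef.dotProduct_mulVec_zero_iff (y - H *ᵥ t)
  rw [star_trivial] at hzero
  rw [Efun, hzero, ← mulVec_zero (H * Hᵀ)⁻¹, (mulVec_injective_of_isUnit hH.inv.isUnit).eq_iff,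
    sub_eq_zero, eq_comm]

lemma le_sigmaML {r : ℕ} {b : ℝ} (h : ∀ t : Fin m → ℝ, l0 t ≤ r → b ≤ Efun H y t / N) :
    b ≤ sigmaML H y r :=
  le_csInf ⟨_, 0, by simp [l0], rfl⟩ fun _ ⟨t, ht, hx⟩ => hx ▸ h t ht

lemma sigmaML_eq_zero (hH : (H * Hᵀ).PosDef) {r : ℕ} {s : Fin m → ℝ} (hs : l0 s ≤ r)
    (hy : H *ᵥ s = y) : sigmaML H y r = 0 := by
  have hlower : ∀ t : Fin m → ℝ, l0 t ≤ r → 0 ≤ Efun H y t / N := fun t _ =>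
    div_nonneg (Efun_nonneg hH t) N.cast_nonneg
  refine le_antisymm (csInf_le ⟨0, ?_⟩ ⟨s, hs, ?_⟩) (le_sigmaML hlower)
  · rintro _ ⟨t, ht, rfl⟩
    exact hlower t ht
  · rw [(Efun_eq_zero_iff hH).mpr hy, zero_div]

lemma sigmaML_pos (hH : (H * Hᵀ).PosDef) (hN : 0 < N) {r : ℕ}
    (hy : y ∉ H.mulVec '' {t | l0 t ≤ r}) : 0 < sigmaML H y r := by
  set K := H.mulVec '' {t | l0 t ≤ r}
  obtain ⟨c, hc, hquad⟩ := hH.inv.exists_pos_mul_sq_norm_le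
  have hδ : 0 < Metric.infDist y K :=
    ((isClosed_mulVec_image_setOf_l0_le H r).notMem_iff_infDist_pos
      ⟨0, 0, by simp [l0], mulVec_zero H⟩).mp hy
  refine (by positivity : 0 < c * Metric.infDist y K ^ 2 / N).trans_le
    (le_sigmaML fun t ht => ?_)
  have hdist : Metric.infDist y K ≤ ‖y - H *ᵥ t‖ :=
    dist_eq_norm y _ ▸ Metric.infDist_le_dist_of_mem ⟨t, ht, rfl⟩
  gcongr
  exact le_trans (by gcongr) (hquad (y - H *ᵥ t))

end ProfileVariance

theorem uss_sparsity_selection_general {N m : ℕ} (H : Matrix (Fin N) (Fin m) ℝ)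
    (hNm : N ≤ m) (hrank : H.rank = N)
    (hURP : ∀ A : Finset (Fin m), A.card = N →
      LinearIndependent ℝ (fun j : A => fun i => H i (j : Fin m)))
    (rd : ℕ) (sd : Fin m → ℝ) (hsd : l0 sd = rd)
    (y : Fin N → ℝ) (hy : y = H *ᵥ sd)
    (hN : max (2 * rd) (rd + 3) ≤ N) :
    sigmaML H y rd = 0 ∧
    (∀ r' : ℕ, r' < rd → 0 < sigmaML H y r') ∧
    (∀ t : Fin m → ℝ, l0 t ≤ rd → Efun H y t / N = sigmaML H y rd → t = sd) := by
  have h2rd : 2 * rd ≤ N := le_of_max_le_left hN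
  have hNpos : 0 < N := by have := le_of_max_le_right hN; omega
  have hH : (H * Hᵀ).PosDef := posDef_mul_transpose_of_rank_eq (by simpa using hrank)
  have hzero : sigmaML H y rd = 0 := sigmaML_eq_zero hH hsd.le hy.symm
  refine ⟨hzero, fun r' hr' => sigmaML_pos hH hNpos ?_, fun t ht hEt => ?_⟩
  · rintro ⟨t, ht : l0 t ≤ r', hty⟩
    obtain rfl : t = sd := eq_of_mulVec_eq_of_l0_add_le hNm hURP (hty.trans hy) (by omega)
    omega
  · rw [hzero, div_eq_zero_iff, Efun_eq_zero_iff hH] at hEt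
    have hty : H *ᵥ t = y := hEt.resolve_right (by positivity)
    exact eq_of_mulVec_eq_of_l0_add_le hNm hURP (hty.trans hy) (by omega)

theorem uss_sparsity_selection {N m : ℕ} (H : Matrix (Fin N) (Fin m) ℝ)
    (hNm : N ≤ m) (hrank : H.rank = N)
    (hURP : ∀ A : Finset (Fin m), A.card = N →
      LinearIndependent ℝ (fun j : A => fun i => H i (j : Fin m)))
    (rd : ℕ) (sd : Fin m → ℝ) (hsd : l0 sd = rd)
    (y : Fin N → ℝ) (hy : y = H *ᵥ sd) (hy0 : y ≠ 0)
    (hN : max (2 * rd) (rd + 3) ≤ N) :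
    sigmaML H y rd = 0 ∧
    (∀ r' : ℕ, r' < rd → 0 < sigmaML H y r') ∧
    (∀ t : Fin m → ℝ, l0 t ≤ rd → Efun H y t / N = sigmaML H y rd → t = sd) :=
  uss_sparsity_selection_general H hNm hrank hURP rd sd hsd y hy hN
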